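/- Under the signal strength condition |α_j| ≥ |β_j| + δ for all j in the true support S (with |S| = s), Gaussian noise column projections γ_j, γ̃_j ~ N(0, σ²/m), and threshold T < δ, the probability that every j ∈ S satisfies W_j ≥ T (i.e., S ⊆ Ŝ) is at least 1 − 4s·exp(−m·(δ−T)²/(8σ²)). -/

import Mathlib

/-!
Off the event that some noise projection `γ_j` or `γ̃_j`, `j ∈ S`, exceeds `(δ - T)/2` in
absolute value, the triangle inequality and the signal strength condition give
`W_j ≥ |α_j| - |β_j| - (δ - T) ≥ T` on all of `S`. Each of these `2s` projections is Gaussian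
with variance `σ²/m`, so its two-sided Chernoff tail is at most `2 exp(-m (δ - T)² / (8σ²))`,
and a union bound gives the claim.
-/

open MeasureTheory ProbabilityTheory Real

theorem le_abs_add_sub_abs_add {a b x y δ T : ℝ} (hab : |b| + δ ≤ |a|)
    (hx : |x| ≤ (δ - T) / 2) (hy : |y| ≤ (δ - T) / 2) :
    T ≤ |a + x| - |b + y| := by
  have ha : |a| - |x| ≤ |a + x| := by simpa using abs_sub_abs_le_abs_sub a (-x)
  linarith [abs_add_le b y]

theorem compl_setOf_forall_le_abs_add_sub_abs_add_subset {ι Ω : Type*} {S : Finset ι}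
    {a b : ι → ℝ} {x y : ι → Ω → ℝ} {δ T : ℝ} (hab : ∀ i ∈ S, |b i| + δ ≤ |a i|) :
    {ω | ∀ i ∈ S, T ≤ |a i + x i ω| - |b i + y i ω|}ᶜ ⊆
      {ω | ∃ i ∈ S, (δ - T) / 2 ≤ |x i ω|} ∪ {ω | ∃ i ∈ S, (δ - T) / 2 ≤ |y i ω|} := by
  intro ω hω
  obtain ⟨i, hi, hlt⟩ : ∃ i ∈ S, |a i + x i ω| - |b i + y i ω| < T := by simpa using hω
  by_contra! hsmall
  simp only [Set.mem_union, Set.mem_ofPred_eq, not_or, not_exists, not_and, not_le] at hsmall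
  exact hlt.not_ge <| le_abs_add_sub_abs_add (hab i hi) (hsmall.1 i hi).le (hsmall.2 i hi).le

theorem MeasureTheory.one_sub_probReal_compl_le {Ω : Type*} [MeasurableSpace Ω] (μ : Measure Ω)
    [IsProbabilityMeasure μ] (s : Set Ω) : 1 - μ.real sᶜ ≤ μ.real s := by
  have hcover : μ.real (s ∪ sᶜ) ≤ μ.real s + μ.real sᶜ := measureReal_union_le s sᶜ
  rw [Set.union_compl_self, probReal_univ] at hcover
  linarith

namespace ProbabilityTheory.HasSubgaussianMGF

variable {Ω : Type*} [MeasurableSpace Ω] {μ : Measure Ω} {X : Ω → ℝ} {c : NNReal}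

theorem of_map_eq_gaussianReal (hX : μ.map X = gaussianReal 0 c) : HasSubgaussianMGF X c μ := by
  have hXm : AEMeasurable X μ := aemeasurable_of_map_neZero (by rw [hX]; infer_instance)
  refine (id_map_iff hXm).mp ⟨fun t ↦ ?_, fun t ↦ ?_⟩
  · rw [hX]
    exact integrable_exp_mul_gaussianReal t
  · simp [hX, mgf_id_gaussianReal]

theorem measureReal_abs_ge_le [IsFiniteMeasure μ] (h : HasSubgaussianMGF X c μ) {ε : ℝ}
    (hε : 0 ≤ ε) : μ.real {ω | ε ≤ |X ω|} ≤ 2 * exp (-ε ^ 2 / (2 * c)) := by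
  have hsplit : {ω | ε ≤ |X ω|} = {ω | ε ≤ X ω} ∪ {ω | ε ≤ (-X) ω} := by
    ext ω
    simp [le_abs]
  calc μ.real {ω | ε ≤ |X ω|}
      ≤ μ.real {ω | ε ≤ X ω} + μ.real {ω | ε ≤ (-X) ω} := hsplit ▸ measureReal_union_le _ _
    _ ≤ exp (-ε ^ 2 / (2 * c)) + exp (-ε ^ 2 / (2 * c)) :=
        add_le_add (h.measure_ge_le hε) (h.neg.measure_ge_le hε)
    _ = 2 * exp (-ε ^ 2 / (2 * c)) := (two_mul _).symm

theorem measureReal_exists_abs_ge_le [IsFiniteMeasure μ] {ι : Type*} {S : Finset ι}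
    {X : ι → Ω → ℝ} (h : ∀ i ∈ S, HasSubgaussianMGF (X i) c μ) {ε : ℝ} (hε : 0 ≤ ε) :
    μ.real {ω | ∃ i ∈ S, ε ≤ |X i ω|} ≤ 2 * S.card * exp (-ε ^ 2 / (2 * c)) := by
  have hunion : {ω | ∃ i ∈ S, ε ≤ |X i ω|} = ⋃ i ∈ S, {ω | ε ≤ |X i ω|} := by
    ext ω
    simp
  calc μ.real {ω | ∃ i ∈ S, ε ≤ |X i ω|}
      ≤ ∑ i ∈ S, μ.real {ω | ε ≤ |X i ω|} := hunion ▸ measureReal_biUnion_finset_le _ _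
    _ ≤ ∑ _i ∈ S, 2 * exp (-ε ^ 2 / (2 * c)) :=
        Finset.sum_le_sum fun i hi ↦ (h i hi).measureReal_abs_ge_le hε
    _ = 2 * S.card * exp (-ε ^ 2 / (2 * c)) := by
        rw [Finset.sum_const, nsmul_eq_mul]
        ring

end ProbabilityTheory.HasSubgaussianMGF

open ProbabilityTheory.HasSubgaussianMGF in
theorem support_inclusion_probability_general
    {Ω : Type*} [MeasurableSpace Ω] (P : Measure Ω) [IsProbabilityMeasure P]
    (σ : ℝ) (m n : ℕ)
    (S : Finset (Fin n)) (s : ℕ) (hs : S.card = s)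
    (α β : Fin n → ℝ) (γ γt : Fin n → Ω → ℝ)
    (hγlaw : ∀ j, Measure.map (γ j) P = gaussianReal 0 (Real.toNNReal (σ ^ 2 / m)))
    (hγtlaw : ∀ j, Measure.map (γt j) P = gaussianReal 0 (Real.toNNReal (σ ^ 2 / m)))
    (W : Fin n → Ω → ℝ)
    (hW : ∀ j ω, W j ω = |α j + γ j ω| - |β j + γt j ω|)
    (δ T : ℝ) (hT : T < δ)
    (hsig : ∀ j ∈ S, |β j| + δ ≤ |α j|) :
    1 - 4 * s * Real.exp (-(m * (δ - T) ^ 2) / (8 * σ ^ 2)) ≤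
      (P {ω | ∀ j ∈ S, T ≤ W j ω}).toReal := by
  simp only [hW]
  have hexp : exp (-((δ - T) / 2) ^ 2 / (2 * (σ ^ 2 / m).toNNReal)) =
      exp (-(m * (δ - T) ^ 2) / (8 * σ ^ 2)) := by
    rw [Real.coe_toNNReal _ (by positivity), mul_div_assoc', div_div_eq_mul_div]
    congr 1
    ring
  have htail : ∀ X : Fin n → Ω → ℝ, (∀ j, P.map (X j) = gaussianReal 0 (σ ^ 2 / m).toNNReal) →
      P.real {ω | ∃ j ∈ S, (δ - T) / 2 ≤ |X j ω|} ≤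
        2 * s * exp (-(m * (δ - T) ^ 2) / (8 * σ ^ 2)) := by
    intro X hlaw
    rw [← hexp, ← hs]
    exact measureReal_exists_abs_ge_le (fun j _ ↦ of_map_eq_gaussianReal (hlaw j)) (by linarith)
  refine le_trans ?_ (one_sub_probReal_compl_le P _)
  have hcompl := compl_setOf_forall_le_abs_add_sub_abs_add_subset (x := γ) (y := γt) (T := T) hsig
  linarith [(measureReal_mono (μ := P) hcompl).trans (measureReal_union_le _ _),
    htail γ hγlaw, htail γt hγtlaw]

/-- Under the signal strength condition `|α_j| ≥ |β_j| + δ` on the true support `S`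
(`|S| = s`), Gaussian noise projections `γ_j, γ̃_j ~ N(0, σ²/m)`, and threshold `T < δ`,
the probability that every `j ∈ S` satisfies `W_j ≥ T` (i.e. `S ⊆ Ŝ`) is at least
`1 − 4s·exp(−m·(δ−T)²/(8σ²))`. -/
theorem support_inclusion_probability
    {Ω : Type*} [MeasurableSpace Ω] (P : Measure Ω) [IsProbabilityMeasure P]
    (σ : ℝ) (hσ : 0 < σ) (m n : ℕ) (hm : 0 < m)
    (S : Finset (Fin n)) (s : ℕ) (hs : S.card = s)
    (α β : Fin n → ℝ) (γ γt : Fin n → Ω → ℝ)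
    (hγ : ∀ j, Measurable (γ j)) (hγt : ∀ j, Measurable (γt j))
    (hγlaw : ∀ j, Measure.map (γ j) P = gaussianReal 0 (Real.toNNReal (σ ^ 2 / m)))
    (hγtlaw : ∀ j, Measure.map (γt j) P = gaussianReal 0 (Real.toNNReal (σ ^ 2 / m)))
    (W : Fin n → Ω → ℝ)
    (hW : ∀ j ω, W j ω = |α j + γ j ω| - |β j + γt j ω|)
    (δ T : ℝ) (hδ : 0 < δ) (hT : T < δ)
    (hsig : ∀ j ∈ S, |β j| + δ ≤ |α j|) :
    1 - 4 * s * Real.exp (-(m * (δ - T) ^ 2) / (8 * σ ^ 2)) ≤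
      (P {ω | ∀ j ∈ S, T ≤ W j ω}).toReal :=
  support_inclusion_probability_general P σ m n S s hs α β γ γt hγlaw hγtlaw W hW δ T hT hsig
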